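/- Let V = V₁ ⊗ V₂ over F_q with dim V₁ = t, dim V₂ = r, and let G = G_t ∘ G_r be a central product acting faithfully and semisimply on V as a subgroup of GL_t(q) ∘ GL_r(q), with G_t acting on V₁ and G_r on V₂. If H^1(G_t, V₁) = 0 and H^1(G_r, V₂) = 0, then H^1(G, V) = 0. -/

import Mathlib

/-!
Restricted to `G₁`, a 1-cocycle of `G₁ × G₂` on `V₁ ⊗ V₂` takes values in a sum of copies of
`V₁`, since `G₁` acts trivially on `V₂`; subtracting a coboundary makes it vanish on `G₁`.
Then `f (σ, τ) = f (1, τ)`, and since `G₁` and `G₂` commute these values lie in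
`(V₁ ⊗ V₂)^{G₁} = V₁^{G₁} ⊗ V₂`, a sum of copies of `V₂` as a `G₂`-module. So `τ ↦ f (1, τ)` is
the coboundary of a `G₁`-invariant vector, which is then a coboundary for all of `G₁ × G₂`.
A central product `G` is a quotient of `G_t × G_r`, and cocycles of `G` pull back to it.
-/

open groupCohomology TensorProduct

universe u

namespace Representation

section Cocycles

variable {k G V W : Type*} [CommRing k] [Group G] [AddCommGroup V] [Module k V]
  [AddCommGroup W] [Module k W] (ρ : Representation k G V) (σ : Representation k G W)

def IsCocycle₁ (f : G → V) : Prop := ∀ g h, f (g * h) = ρ g (f h) + f g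

def IsCoboundary₁ (f : G → V) : Prop := ∃ x, ∀ g, ρ g x - x = f g

def H1Vanishes : Prop := ∀ f : G → V, ρ.IsCocycle₁ f → ρ.IsCoboundary₁ f

variable {ρ σ}

lemma IsCocycle₁.map {f : G → V} (hf : ρ.IsCocycle₁ f) (L : ρ.IntertwiningMap σ) :
    σ.IsCocycle₁ (L ∘ f) := fun g h => by
  simp only [Function.comp_apply, hf g h, map_add, L.isIntertwining]

lemma IsCoboundary₁.map {f : G → V} (hf : ρ.IsCoboundary₁ f) (L : ρ.IntertwiningMap σ) :
    σ.IsCoboundary₁ (L ∘ f) := by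
  obtain ⟨x, hx⟩ := hf
  exact ⟨L x, fun g => by simp only [Function.comp_apply, ← hx, map_sub, L.isIntertwining]⟩

lemma H1Vanishes.of_equiv (h : ρ.H1Vanishes) (e : ρ.Equiv σ) : σ.H1Vanishes := fun f hf => by
  have := (h _ (hf.map e.symm.toIntertwiningMap)).map e.toIntertwiningMap
  simpa [Function.comp_def] using this

lemma IsCocycle₁.comp {H : Type*} [Group H] {f : G → V} (hf : ρ.IsCocycle₁ f) (φ : H →* G) :
    IsCocycle₁ (ρ.comp φ) (f ∘ φ) := fun g h => by
  simp [hf (φ g) (φ h)]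

lemma H1Vanishes.of_comp_surjective {H : Type*} [Group H] {φ : H →* G}
    (hφ : Function.Surjective φ) (h : H1Vanishes (ρ.comp φ)) : ρ.H1Vanishes := fun f hf => by
  obtain ⟨x, hx⟩ := h _ (hf.comp φ)
  refine ⟨x, fun g => ?_⟩
  obtain ⟨g, rfl⟩ := hφ g
  exact hx g

lemma IsCocycle₁.sub_coboundary {f : G → V} (hf : ρ.IsCocycle₁ f) (x : V) :
    ρ.IsCocycle₁ (fun g => f g - (ρ g x - x)) := fun g h => by
  simp only [hf g h, map_mul, Module.End.mul_apply, map_sub]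
  abel

lemma IsCocycle₁.apply_eq_of_commute {f : G → V} (hf : ρ.IsCocycle₁ f) {a b : G}
    (ha : f a = 0) (hab : Commute a b) : ρ a (f b) = f b := by
  have := hf a b
  rw [hab.eq, hf b a, ha, map_zero, zero_add, add_zero] at this
  exact this.symm

@[simp]
lemma finsupp_apply_apply {α : Type*} (g : G) (x : α →₀ V) (i : α) :
    ρ.finsupp α g x i = ρ g (x i) := by
  induction x using Finsupp.induction_linear with
  | zero => simp
  | add x y hx hy => simp [hx, hy]
  | single j v => by_cases hij : j = i <;> simp [hij]

lemma H1Vanishes.finsupp (h : ρ.H1Vanishes) (α : Type*) [Finite α] :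
    (ρ.finsupp α).H1Vanishes := fun f hf => by
  choose x hx using fun i => h (fun g => f g i) fun g g' => by simp [hf g g']
  have := Fintype.ofFinite α
  refine ⟨Finsupp.equivFunOnFinite.symm x, fun g => Finsupp.ext fun i => ?_⟩
  simp [hx]

end Cocycles

lemma subsingleton_H1_iff {k G V : Type u} [CommRing k] [Group G] [AddCommGroup V] [Module k V]
    (ρ : Representation k G V) : Subsingleton (H1 (Rep.of ρ)) ↔ ρ.H1Vanishes := by
  constructor
  · intro h f hf
    obtain ⟨x, hx⟩ := (H1π_eq_zero_iff (A := Rep.of ρ)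
      ⟨f, (mem_cocycles₁_iff (A := Rep.of ρ) f).2 hf⟩).1 (Subsingleton.elim _ _)
    exact ⟨x, fun g => (d₀₁_hom_apply (Rep.of ρ) x g).symm.trans (congrFun hx g)⟩
  · intro h
    refine subsingleton_of_forall_eq 0 fun a => ?_
    induction a using H1_induction_on with
    | h x =>
      rw [H1π_eq_zero_iff]
      obtain ⟨y, hy⟩ := h x ((mem_cocycles₁_iff x).1 x.2)
      exact ⟨y, funext fun g => by rw [d₀₁_hom_apply, hy]⟩

section TensorTrivial

variable {k G V W : Type*} [CommRing k] [Group G] [AddCommGroup V] [Module k V]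
  [AddCommGroup W] [Module k W] (ρ : Representation k G V)

def _root_.LinearMap.trivialIntertwiningMap {V' : Type*} [AddCommGroup V'] [Module k V']
    (f : V →ₗ[k] V') : (trivial k G V).IntertwiningMap (trivial k G V') :=
  ⟨f, fun _ => rfl⟩

noncomputable def tprodTrivialEquivFinsupp {ι : Type*} [DecidableEq ι] (b : Module.Basis ι k W) :
    (ρ.tprod (trivial k G W)).Equiv (ρ.finsupp ι) :=
  .mk (TensorProduct.equivFinsuppOfBasisRight b) fun g => by
    ext v w i
    simp

noncomputable def trivialTprodEquivFinsupp {ι : Type*} [DecidableEq ι] (b : Module.Basis ι k W) :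
    ((trivial k G W).tprod ρ).Equiv (ρ.finsupp ι) :=
  .mk (TensorProduct.equivFinsuppOfBasisLeft b) fun g => by
    ext w v i
    simp

variable {ρ}

lemma H1Vanishes.tprod_trivial (h : ρ.H1Vanishes) [Module.Free k W] [Module.Finite k W] :
    (ρ.tprod (trivial k G W)).H1Vanishes := by
  classical
  exact (h.finsupp _).of_equiv (tprodTrivialEquivFinsupp ρ (Module.Free.chooseBasis k W)).symm

lemma H1Vanishes.trivial_tprod (h : ρ.H1Vanishes) [Module.Free k W] [Module.Finite k W] :
    ((trivial k G W).tprod ρ).H1Vanishes := by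
  classical
  exact (h.finsupp _).of_equiv (trivialTprodEquivFinsupp ρ (Module.Free.chooseBasis k W)).symm

variable (ρ W) in
lemma invariants_tprod_trivial [Module.Free k W] :
    (ρ.tprod (trivial k G W)).invariants = LinearMap.range (ρ.invariants.subtype.rTensor W) := by
  classical
  apply le_antisymm
  · intro x hx
    let b := Module.Free.chooseBasis k W
    let e := tprodTrivialEquivFinsupp ρ b
    have he (i) : e x i ∈ ρ.invariants := fun g => by
      have := IntertwiningMap.isIntertwining _ _ e.toIntertwiningMap g x
      rw [Equiv.coe_toIntertwiningMap, hx g] at this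
      rw [← finsupp_apply_apply, ← this]
    rw [← e.symm_apply_apply x]
    change (equivFinsuppOfBasisRight b).symm (e x) ∈ _
    rw [equivFinsuppOfBasisRight_symm_apply]
    exact Submodule.finsuppSum_mem _ _ _ _ fun i _ => ⟨⟨e x i, he i⟩ ⊗ₜ b i, rfl⟩
  · rintro _ ⟨y, rfl⟩ g
    have : ρ.tprod (trivial k G W) g ∘ₗ ρ.invariants.subtype.rTensor W =
        ρ.invariants.subtype.rTensor W := by
      ext v w
      simp [v.2 g]
    exact congr($this y)

end TensorTrivial

section Subspace

variable {k G V W : Type*} [Field k] [Group G] [AddCommGroup V] [Module k V]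
  [AddCommGroup W] [Module k W] {ρ : Representation k G W}

lemma H1Vanishes.exists_mem_range_rTensor_isCoboundary (h : ρ.H1Vanishes) (U : Submodule k V)
    [FiniteDimensional k U] {c : G → V ⊗[k] W} (hc : ((trivial k G V).tprod ρ).IsCocycle₁ c)
    (hcU : ∀ g, c g ∈ LinearMap.range (U.subtype.rTensor W)) :
    ∃ w ∈ LinearMap.range (U.subtype.rTensor W), ∀ g, (trivial k G V).tprod ρ g w - w = c g := by
  obtain ⟨P, hP⟩ := U.subtype.exists_leftInverse_of_injective U.ker_subtype
  let incl := (U.subtype.trivialIntertwiningMap (G := G)).rTensor ρ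
  let proj := (P.trivialIntertwiningMap (G := G)).rTensor ρ
  have hc_eq (g : G) : incl (proj (c g)) = c g := by
    obtain ⟨y, hy⟩ := hcU g
    rw [← hy]
    change U.subtype.rTensor W (P.rTensor W (U.subtype.rTensor W y)) = _
    rw [← LinearMap.rTensor_comp_apply W P U.subtype, hP, LinearMap.rTensor_id_apply]
  obtain ⟨w, hw⟩ := h.trivial_tprod (W := U) _ (hc.map proj)
  refine ⟨incl w, ⟨w, rfl⟩, fun g => ?_⟩
  rw [← hc_eq, ← Function.comp_apply (f := ⇑proj), ← hw g, map_sub,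
    IntertwiningMap.isIntertwining]

end Subspace

section OuterTprod

variable {k G₁ G₂ V₁ V₂ : Type*} [CommRing k] [Group G₁] [Group G₂]
  [AddCommGroup V₁] [Module k V₁] [AddCommGroup V₂] [Module k V₂]
  (ρ₁ : Representation k G₁ V₁) (ρ₂ : Representation k G₂ V₂)

noncomputable def outerTprod : Representation k (G₁ × G₂) (V₁ ⊗[k] V₂) :=
  tprod (ρ₁.comp (MonoidHom.fst G₁ G₂)) (ρ₂.comp (MonoidHom.snd G₁ G₂))

@[simp]
lemma outerTprod_apply (g : G₁ × G₂) :
    outerTprod ρ₁ ρ₂ g = TensorProduct.map (ρ₁ g.1) (ρ₂ g.2) := rfl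

lemma outerTprod_comp_inl :
    (outerTprod ρ₁ ρ₂).comp (MonoidHom.inl G₁ G₂) = ρ₁.tprod (trivial k G₁ V₂) := by
  ext; simp

lemma outerTprod_comp_inr :
    (outerTprod ρ₁ ρ₂).comp (MonoidHom.inr G₁ G₂) = (trivial k G₂ V₁).tprod ρ₂ := by
  ext; simp

end OuterTprod

section OuterTprodH1

variable {k G₁ G₂ V₁ V₂ : Type*} [Field k] [Group G₁] [Group G₂]
  [AddCommGroup V₁] [Module k V₁] [AddCommGroup V₂] [Module k V₂]
  {ρ₁ : Representation k G₁ V₁} {ρ₂ : Representation k G₂ V₂}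

lemma H1Vanishes.isCoboundary₁_outerTprod (h₂ : ρ₂.H1Vanishes) [FiniteDimensional k V₁]
    {f : G₁ × G₂ → V₁ ⊗[k] V₂} (hf : (outerTprod ρ₁ ρ₂).IsCocycle₁ f)
    (hf₁ : ∀ σ, f (σ, 1) = 0) : (outerTprod ρ₁ ρ₂).IsCoboundary₁ f := by
  set ψ := outerTprod ρ₁ ρ₂
  have hf_eq (σ : G₁) (τ : G₂) : f (σ, τ) = f (1, τ) := by
    simpa [hf₁] using hf (1, τ) (σ, 1)
  have hf_mem (τ : G₂) : f (1, τ) ∈ LinearMap.range (ρ₁.invariants.subtype.rTensor V₂) := by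
    rw [← invariants_tprod_trivial, ← outerTprod_comp_inl ρ₁ ρ₂]
    exact fun σ => hf.apply_eq_of_commute (hf₁ σ) (MonoidHom.commute_inl_inr σ τ)
  obtain ⟨w, hw_mem, hw⟩ := h₂.exists_mem_range_rTensor_isCoboundary _
    (outerTprod_comp_inr ρ₁ ρ₂ ▸ hf.comp (MonoidHom.inr G₁ G₂)) hf_mem
  rw [← invariants_tprod_trivial, ← outerTprod_comp_inl ρ₁ ρ₂] at hw_mem
  rw [← outerTprod_comp_inr ρ₁ ρ₂] at hw
  refine ⟨w, fun ⟨σ, τ⟩ => ?_⟩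
  calc ψ (σ, τ) w - w = ψ (1, τ) (ψ (σ, 1) w) - w := by
        rw [← Module.End.mul_apply, ← map_mul, Prod.mk_mul_mk, one_mul, mul_one]
    _ = f (σ, τ) := by rw [hf_eq, show ψ (σ, 1) w = w from hw_mem σ]; exact hw τ

lemma H1Vanishes.outerTprod (h₁ : ρ₁.H1Vanishes) (h₂ : ρ₂.H1Vanishes) [FiniteDimensional k V₁]
    [FiniteDimensional k V₂] : (outerTprod ρ₁ ρ₂).H1Vanishes := by
  intro f hf
  obtain ⟨v, hv⟩ :
      IsCoboundary₁ ((ρ₁.outerTprod ρ₂).comp (MonoidHom.inl G₁ G₂)) (f ∘ MonoidHom.inl G₁ G₂) :=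
    outerTprod_comp_inl ρ₁ ρ₂ ▸ h₁.tprod_trivial _
      (outerTprod_comp_inl ρ₁ ρ₂ ▸ hf.comp (MonoidHom.inl G₁ G₂))
  obtain ⟨w, hw⟩ := h₂.isCoboundary₁_outerTprod (hf.sub_coboundary v) fun σ =>
    sub_eq_zero.2 (hv σ).symm
  refine ⟨v + w, fun g => ?_⟩
  rw [map_add, add_sub_add_comm, hw g, add_sub_cancel]

end OuterTprodH1

end Representation

theorem h1_central_product_tensor_eq_zero_general
    (F : Type) [Field F]
    (V₁ V₂ : Type) [AddCommGroup V₁] [Module F V₁] [FiniteDimensional F V₁]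
    [AddCommGroup V₂] [Module F V₂] [FiniteDimensional F V₂]
    (Gt Gr G : Type) [Group Gt] [Group Gr] [Group G]
    (ρ₁ : Representation F Gt V₁) (ρ₂ : Representation F Gr V₂)
    (φ : Gt × Gr →* G) (hφ : Function.Surjective φ)
    (ρ : Representation F G (V₁ ⊗[F] V₂))
    (hcompat : ∀ (σ : Gt) (τ : Gr), ρ (φ (σ, τ)) = TensorProduct.map (ρ₁ σ) (ρ₂ τ))
    (h1 : Subsingleton (groupCohomology.H1 (Rep.of ρ₁)))
    (h2 : Subsingleton (groupCohomology.H1 (Rep.of ρ₂))) :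
    Subsingleton (groupCohomology.H1 (Rep.of ρ)) := by
  rw [Representation.subsingleton_H1_iff] at h1 h2 ⊢
  have hρφ : ρ.comp φ = ρ₁.outerTprod ρ₂ := MonoidHom.ext fun g => hcompat g.1 g.2
  exact Representation.H1Vanishes.of_comp_surjective hφ (hρφ ▸ h1.outerTprod h2)

/-- Let `V = V₁ ⊗ V₂` over `F_q` and let `G = G_t ∘ G_r` be a central
product (a quotient of `G_t × G_r`) acting faithfully and semisimply on `V` as a subgroup of
`GL(V₁) ∘ GL(V₂)`, with `G_t` acting on `V₁` (via `ρ₁`) and `G_r` acting on `V₂` (via `ρ₂`),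
an element `φ (σ, τ)` of the central product acting as `σ ⊗ τ`.
If `H¹(G_t, V₁) = 0` and `H¹(G_r, V₂) = 0`, then `H¹(G, V) = 0`. -/
theorem h1_central_product_tensor_eq_zero
    (F : Type) [Field F] [Fintype F]
    (V₁ V₂ : Type) [AddCommGroup V₁] [Module F V₁] [FiniteDimensional F V₁]
    [AddCommGroup V₂] [Module F V₂] [FiniteDimensional F V₂]
    (Gt Gr G : Type) [Group Gt] [Group Gr] [Group G]
    (ρ₁ : Representation F Gt V₁) (ρ₂ : Representation F Gr V₂)
    (φ : Gt × Gr →* G) (hφ : Function.Surjective φ)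
    (ρ : Representation F G (V₁ ⊗[F] V₂))
    (hcompat : ∀ (σ : Gt) (τ : Gr), ρ (φ (σ, τ)) = TensorProduct.map (ρ₁ σ) (ρ₂ τ))
    (hfaith : Function.Injective ρ)
    (hss : ∀ W : Submodule F (V₁ ⊗[F] V₂), (∀ g : G, ∀ v ∈ W, ρ g v ∈ W) →
      ∃ W' : Submodule F (V₁ ⊗[F] V₂), (∀ g : G, ∀ v ∈ W', ρ g v ∈ W') ∧ IsCompl W W')
    (h1 : Subsingleton (groupCohomology.H1 (Rep.of ρ₁)))
    (h2 : Subsingleton (groupCohomology.H1 (Rep.of ρ₂))) :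
    Subsingleton (groupCohomology.H1 (Rep.of ρ)) :=
  h1_central_product_tensor_eq_zero_general F V₁ V₂ Gt Gr G ρ₁ ρ₂ φ hφ ρ hcompat h1 h2
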